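/- With r_{p,γ} as defined (r_{p,γ}(0) = 1 + γ/3, and for k ≥ 1 with p^{a-1} ≤ k < p^a and leading digit κ_{a-1}: r_{p,γ}(k) = (γ/(2p^{2a}))(1/sin²(κ_{a-1}π/p) − 1/3)), for every g ∈ ℕ one has ∑_{k=0}^{p^g − 1} r_{p,γ}(k) = 1 + γ/3 + (γ/6)(1 − 1/p^g). -/

import Mathlib

/-! On the block `p ^ j ≤ k < p ^ (j + 1)` the coefficient depends only on the leading digit `κ`,
and each `κ ∈ {1, …, p - 1}` occurs `p ^ j` times, so the block contributes
`p ^ j · γ / (2 p ^ (2j + 2)) · ∑_κ (csc² (κπ/p) - 1/3) = γ (p - 1) / (6 p ^ (j + 1))` by the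
classical identity `∑_{κ=1}^{n-1} csc² (κπ/n) = (n² - 1) / 3`; these contributions sum to
`γ / 6 · (1 - p ^ (-g))`.

For the cosecant identity put `x = exp (2πiκ/n) ≠ 1`: then `4 sin² (κπ/n) = (1 - x) (1 - x⁻¹)` and
`(x - 1) ∑_{m<n} m x ^ m = n`, so `csc² (κπ/n)` is `4 / n²` times the product of the discrete Fourier
coefficients of `m ↦ m` at `κ` and `-κ`, and Parseval over the `n`-th roots of unity sums these. -/

/-- The coefficients of the `p`-adic shift invariant kernel of the anchored
Sobolev space: `r p γ 0 = 1 + γ/3` and for `k ≥ 1` with `a` base-`p` digits and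
most significant digit `κ`, `r p γ k = γ/(2 p^(2a)) (1/sin²(κπ/p) - 1/3)`. -/
noncomputable def rCoeff (p : ℕ) (γ : ℝ) (k : ℕ) : ℝ :=
  if k = 0 then 1 + γ / 3
  else
    γ / (2 * (p : ℝ) ^ (2 * (Nat.log p k + 1))) *
      (1 / (Real.sin ((k / p ^ Nat.log p k : ℕ) * Real.pi / p)) ^ 2 - 1 / 3)

open Finset

section CommRing
variable {R : Type*} [CommRing R]

theorem sum_range_natCast_mul_two (n : ℕ) :
    (∑ m ∈ range n, (m : R)) * 2 = n * (n - 1) := by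
  induction n with
  | zero => simp
  | succ n ih => rw [sum_range_succ, add_mul, ih]; push_cast; ring

theorem sum_range_natCast_sq_mul_six (n : ℕ) :
    (∑ m ∈ range n, (m : R) ^ 2) * 6 = n * (n - 1) * (2 * n - 1) := by
  induction n with
  | zero => simp
  | succ n ih => rw [sum_range_succ, add_mul, ih]; push_cast; ring

theorem sub_one_mul_sum_range_natCast_mul_pow (x : R) (n : ℕ) :
    (x - 1) * ∑ m ∈ range n, (m : R) * x ^ m
      = (n - 1) * x ^ n - ∑ m ∈ range n, x ^ m + 1 := by
  induction n with
  | zero => simp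
  | succ n ih => rw [sum_range_succ, sum_range_succ, mul_add, ih]; push_cast; ring

end CommRing

section Field
variable {K : Type*} [Field K]

theorem geom_sum_eq_zero_of_pow_eq_one {u : K} {n : ℕ} (hu : u ≠ 1) (hun : u ^ n = 1) :
    ∑ k ∈ range n, u ^ k = 0 := by
  rw [geom_sum_eq hu, hun, sub_self, zero_div]

theorem sub_one_mul_sum_range_natCast_mul_pow_of_pow_eq_one {x : K} {n : ℕ} (hx : x ≠ 1)
    (hxn : x ^ n = 1) : (x - 1) * ∑ m ∈ range n, (m : K) * x ^ m = n := by
  rw [sub_one_mul_sum_range_natCast_mul_pow, geom_sum_eq_zero_of_pow_eq_one hx hxn, hxn]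
  ring

theorem inv_one_sub_mul_one_sub_inv_of_pow_eq_one {x : K} {n : ℕ} (hn : (n : K) ≠ 0)
    (hx : x ≠ 1) (hxn : x ^ n = 1) :
    ((1 - x) * (1 - x⁻¹))⁻¹
      = (∑ m ∈ range n, (m : K) * x ^ m) * (∑ m ∈ range n, (m : K) * x⁻¹ ^ m) / n ^ 2 := by
  have hx' : x⁻¹ ≠ 1 := inv_ne_one.mpr hx
  have h := sub_one_mul_sum_range_natCast_mul_pow_of_pow_eq_one hx hxn
  have h' := sub_one_mul_sum_range_natCast_mul_pow_of_pow_eq_one hx' (by rw [inv_pow, hxn, inv_one])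
  have h1 : (1 : K) - x ≠ 0 := sub_ne_zero.mpr hx.symm
  have h2 : (1 : K) - x⁻¹ ≠ 0 := sub_ne_zero.mpr hx'.symm
  have key : (1 - x) * (1 - x⁻¹) * ((∑ m ∈ range n, (m : K) * x ^ m) *
      (∑ m ∈ range n, (m : K) * x⁻¹ ^ m)) = n ^ 2 := by
    linear_combination ((x⁻¹ - 1) * ∑ m ∈ range n, (m : K) * x⁻¹ ^ m) * h + n * h'
  rw [eq_div_iff (pow_ne_zero 2 hn), ← key, inv_mul_cancel_left₀ (mul_ne_zero h1 h2)]

theorem IsPrimitiveRoot.sum_range_mul_sum_range_inv {ζ : K} {n : ℕ} (hζ : IsPrimitiveRoot ζ n)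
    (a b : ℕ → K) :
    ∑ k ∈ range n, (∑ m ∈ range n, a m * (ζ ^ k) ^ m) * (∑ m ∈ range n, b m * (ζ ^ k)⁻¹ ^ m)
      = n * ∑ m ∈ range n, a m * b m := by
  have orth : ∀ m ∈ range n, ∀ m' ∈ range n,
      ∑ k ∈ range n, (ζ ^ m * (ζ ^ m')⁻¹) ^ k = if m = m' then (n : K) else 0 := by
    intro m hm m' hm'
    have hζm' : ζ ^ m' ≠ 0 := pow_ne_zero _ (hζ.ne_zero (by grind))
    split_ifs with h
    · simp [h, mul_inv_cancel₀ hζm']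
    · refine geom_sum_eq_zero_of_pow_eq_one (fun h1 => h ?_) ?_
      · exact hζ.pow_inj (mem_range.mp hm) (mem_range.mp hm') ((mul_inv_eq_one₀ hζm').mp h1)
      · rw [mul_pow, inv_pow, ← pow_mul, ← pow_mul, mul_comm m, mul_comm m', pow_mul, pow_mul,
          hζ.pow_eq_one, one_pow, one_pow, inv_one, mul_one]
  calc _ = ∑ m ∈ range n, ∑ m' ∈ range n,
        a m * b m' * ∑ k ∈ range n, (ζ ^ m * (ζ ^ m')⁻¹) ^ k := by
        simp_rw [sum_mul_sum, mul_sum]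
        rw [sum_comm]
        refine sum_congr rfl fun m _ => ?_
        rw [sum_comm]
        refine sum_congr rfl fun m' _ => sum_congr rfl fun k _ => ?_
        rw [mul_pow, inv_pow, inv_pow, ← pow_mul, ← pow_mul, ← pow_mul, ← pow_mul, mul_comm k m,
          mul_comm k m']
        ring
    _ = n * ∑ m ∈ range n, a m * b m := by
        rw [mul_sum]
        refine sum_congr rfl fun m hm => ?_
        rw [sum_congr rfl fun m' hm' => by rw [orth m hm m' hm']]
        simp [hm, mul_comm]

end Field

theorem Complex.one_sub_exp_mul_one_sub_exp_neg (φ : ℂ) :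
    (1 - exp (2 * φ * I)) * (1 - exp (-(2 * φ) * I)) = 4 * sin φ ^ 2 := by
  have hcos := two_cos (2 * φ)
  rw [cos_two_mul_eq_one_sub] at hcos
  have hprod : exp (2 * φ * I) * exp (-(2 * φ) * I) = 1 := by rw [← exp_add]; simp
  linear_combination hprod + hcos

open Real Complex in
theorem ofReal_one_div_sin_sq_eq_of_mem_Ico {n k : ℕ} (hk : k ∈ Ico 1 n) :
    ((1 / Real.sin (k * π / n) ^ 2 : ℝ) : ℂ) =
      4 * ((∑ m ∈ range n, (m : ℂ) * (cexp (2 * π * I / n) ^ k) ^ m) *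
        (∑ m ∈ range n, (m : ℂ) * (cexp (2 * π * I / n) ^ k)⁻¹ ^ m) / n ^ 2) := by
  obtain ⟨hk0, hkn⟩ := mem_Ico.mp hk
  have hn : n ≠ 0 := by omega
  have hζ := isPrimitiveRoot_exp n hn
  have hexp : cexp (2 * π * I / n) ^ k = cexp (2 * (k * π / n : ℝ) * I) := by
    rw [← Complex.exp_nat_mul]; push_cast; ring_nf
  rw [← inv_one_sub_mul_one_sub_inv_of_pow_eq_one (by exact_mod_cast hn)
      (hζ.pow_ne_one_of_pos_of_lt (by omega) hkn) (by rw [pow_right_comm, hζ.pow_eq_one, one_pow]),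
    hexp, ← Complex.exp_neg, ← neg_mul, one_sub_exp_mul_one_sub_exp_neg]
  push_cast
  ring

open Real Complex in
theorem sum_Ico_one_div_sin_sq {n : ℕ} (hn : n ≠ 0) :
    ∑ k ∈ Ico 1 n, 1 / Real.sin (k * π / n) ^ 2 = ((n : ℝ) ^ 2 - 1) / 3 := by
  have parseval := (isPrimitiveRoot_exp n hn).sum_range_mul_sum_range_inv (fun m => (m : ℂ))
    (fun m => (m : ℂ))
  rw [sum_range_eq_add_Ico _ (Nat.pos_of_ne_zero hn)] at parseval
  simp only [pow_zero, inv_one, one_pow, mul_one, ← sq] at parseval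
  have hsum := eq_div_of_mul_eq two_ne_zero (sum_range_natCast_mul_two (R := ℂ) n)
  have hsq := eq_div_of_mul_eq (by norm_num) (sum_range_natCast_sq_mul_six (R := ℂ) n)
  apply Complex.ofReal_injective
  rw [ofReal_sum, sum_congr rfl fun k hk => ofReal_one_div_sin_sq_eq_of_mem_Ico hk, ← mul_sum, ← sum_div,
    eq_sub_of_add_eq' parseval, hsum, hsq]
  field_simp
  push_cast
  ring

theorem Finset.sum_Ico_mul_comp_div {M : Type*} [AddCommMonoid M] (f : ℕ → M) (q : ℕ) {a b : ℕ}
    (hab : a ≤ b) : ∑ k ∈ Ico (a * q) (b * q), f (k / q) = q • ∑ i ∈ Ico a b, f i := by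
  induction b, hab using Nat.le_induction with
  | base => simp
  | succ b hab ih =>
    have hblock : ∑ k ∈ Ico (b * q) ((b + 1) * q), f (k / q) = q • f b := by
      rw [sum_Ico_eq_sum_range, add_mul, one_mul, Nat.add_sub_cancel_left,
        sum_congr rfl (g := fun _ => f b), sum_const, card_range]
      intro j hj
      rw [mul_comm, Nat.mul_add_div (by grind), Nat.div_eq_of_lt (mem_range.mp hj), add_zero]
    rw [← sum_Ico_consecutive _ (Nat.mul_le_mul_right q hab) (Nat.mul_le_mul_right q b.le_succ),
      ih, hblock, sum_Ico_succ_top hab, smul_add]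

open Real in
theorem rCoeff_of_mem_Ico {p g k : ℕ} (γ : ℝ) (hk : k ∈ Ico (p ^ g) (p ^ (g + 1))) :
    rCoeff p γ k
      = γ / (2 * (p : ℝ) ^ (2 * (g + 1))) * (1 / sin ((k / p ^ g : ℕ) * π / p) ^ 2 - 1 / 3) := by
  obtain ⟨hlo, hhi⟩ := mem_Ico.mp hk
  have hk0 : k ≠ 0 := by
    rintro rfl
    exact hhi.ne' (pow_eq_zero_of_le g.le_succ (Nat.le_zero.mp hlo))
  rw [rCoeff, if_neg hk0, Nat.log_eq_of_pow_le_of_lt_pow hlo hhi]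

theorem sum_rCoeff_Ico_pow {p : ℕ} (hp : 0 < p) (γ : ℝ) (g : ℕ) :
    ∑ k ∈ Ico (p ^ g) (p ^ (g + 1)), rCoeff p γ k = γ / 6 * ((p - 1) / (p : ℝ) ^ (g + 1)) := by
  have hIco : Ico (p ^ g) (p ^ (g + 1)) = Ico (1 * p ^ g) (p * p ^ g) := by
    rw [one_mul, pow_succ']
  rw [sum_congr rfl fun k hk => rCoeff_of_mem_Ico γ hk, hIco,
    sum_Ico_mul_comp_div (fun κ => γ / (2 * (p : ℝ) ^ (2 * (g + 1))) *
      (1 / Real.sin (κ * Real.pi / p) ^ 2 - 1 / 3)) _ hp,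
    ← mul_sum, sum_sub_distrib, sum_Ico_one_div_sin_sq hp.ne', sum_const, Nat.card_Ico,
    nsmul_eq_mul, nsmul_eq_mul, Nat.cast_sub hp]
  field_simp
  push_cast
  ring

theorem sum_rCoeff_below_pg_general (p : ℕ) (hp : p.Prime) (γ : ℝ) (g : ℕ) :
    ∑ k ∈ Finset.range (p ^ g), rCoeff p γ k
      = 1 + γ / 3 + γ / 6 * (1 - 1 / (p : ℝ) ^ g) := by
  induction g with
  | zero => simp [rCoeff]
  | succ g ih =>
    rw [← sum_range_add_sum_Ico _ (Nat.pow_le_pow_right hp.pos g.le_succ), ih,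
      sum_rCoeff_Ico_pow hp.pos]
    have hp0 : (p : ℝ) ≠ 0 := mod_cast hp.ne_zero
    field_simp
    ring

theorem sum_rCoeff_below_pg (p : ℕ) (hp : p.Prime) (γ : ℝ) (hγ : 0 < γ) (g : ℕ) :
    ∑ k ∈ Finset.range (p ^ g), rCoeff p γ k
      = 1 + γ / 3 + γ / 6 * (1 - 1 / (p : ℝ) ^ g) :=
  sum_rCoeff_below_pg_general p hp γ g
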